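/- arXiv:2503.14117 — 2 statements merged into one kernel-verified Lean document; each statement's English description precedes it below -/
import Mathlib

section
/- Let N = 2^n with n ≥ 1, and let G_NEQ = {(u, v) ∈ [N] × [N] : u ≠ v}. Then ρ_can(G_NEQ, 𝓖_{N,N}) = ρ(G_NEQ, 𝓖_{N,N}) = D_∩(G_NEQ | 𝓖_{N,N}) = n = log₂ N. -/
open Set Filter

section Defs

variable {Γ : Type*}

/-- `StepOK 𝓑 seq ops` says that each set `seq i` in the sequence is obtained as the
union or intersection (according to `ops i`) of two sets, each of which is either a
generator in `𝓑` or an earlier set of the sequence. -/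
def StepOK (𝓑 : Set (Set Γ)) {t : ℕ} (seq : Fin t → Set Γ) (ops : Fin t → Bool) : Prop :=
  ∀ i : Fin t, ∃ X Y : Set Γ,
    (X ∈ 𝓑 ∨ ∃ j : Fin t, j < i ∧ X = seq j) ∧
    (Y ∈ 𝓑 ∨ ∃ j : Fin t, j < i ∧ Y = seq j) ∧
    seq i = if ops i = true then X ∩ Y else X ∪ Y

/-- The number of intersection operations used in the sequence. -/
def interCount {t : ℕ} (ops : Fin t → Bool) : ℕ :=
  (Finset.univ.filter fun i => ops i = true).card

/-- The number of union operations used in the sequence. -/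
def unionCount {t : ℕ} (ops : Fin t → Bool) : ℕ :=
  (Finset.univ.filter fun i => ops i = false).card

/-- The discrete complexity `D(A | 𝓑)`: the minimum length of a sequence generating
`A` from `𝓑` (`⊤` if none exists). -/
noncomputable def Dtot (A : Set Γ) (𝓑 : Set (Set Γ)) : ℕ∞ :=
  sInf {m : ℕ∞ | ∃ (t : ℕ) (seq : Fin (t + 1) → Set Γ) (ops : Fin (t + 1) → Bool),
    StepOK 𝓑 seq ops ∧ seq (Fin.last t) = A ∧ m = ((t + 1 : ℕ) : ℕ∞)}

/-- The intersection complexity `D_∩(A | 𝓑)`: the minimum number of intersection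
operations over all sequences generating `A` from `𝓑`. -/
noncomputable def Dcap (A : Set Γ) (𝓑 : Set (Set Γ)) : ℕ∞ :=
  sInf {m : ℕ∞ | ∃ (t : ℕ) (seq : Fin (t + 1) → Set Γ) (ops : Fin (t + 1) → Bool),
    StepOK 𝓑 seq ops ∧ seq (Fin.last t) = A ∧ m = ((interCount ops : ℕ) : ℕ∞)}

/-- The union complexity `D_∪(A | 𝓑)`. -/
noncomputable def Dcup (A : Set Γ) (𝓑 : Set (Set Γ)) : ℕ∞ :=
  sInf {m : ℕ∞ | ∃ (t : ℕ) (seq : Fin (t + 1) → Set Γ) (ops : Fin (t + 1) → Bool),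
    StepOK 𝓑 seq ops ∧ seq (Fin.last t) = A ∧ m = ((unionCount ops : ℕ) : ℕ∞)}

/-- Simultaneous discrete complexity `D(A_1, …, A_ℓ | 𝓑)` of generating every set in
the family `As` from `𝓑`. -/
noncomputable def DtotSim (As : Set (Set Γ)) (𝓑 : Set (Set Γ)) : ℕ∞ :=
  sInf {m : ℕ∞ | ∃ (t : ℕ) (seq : Fin (t + 1) → Set Γ) (ops : Fin (t + 1) → Bool),
    StepOK 𝓑 seq ops ∧ (∀ A ∈ As, ∃ i, seq i = A) ∧ m = ((t + 1 : ℕ) : ℕ∞)}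

/-- Simultaneous intersection complexity. -/
noncomputable def DcapSim (As : Set (Set Γ)) (𝓑 : Set (Set Γ)) : ℕ∞ :=
  sInf {m : ℕ∞ | ∃ (t : ℕ) (seq : Fin (t + 1) → Set Γ) (ops : Fin (t + 1) → Bool),
    StepOK 𝓑 seq ops ∧ (∀ A ∈ As, ∃ i, seq i = A) ∧ m = ((interCount ops : ℕ) : ℕ∞)}

/-- Simultaneous union complexity. -/
noncomputable def DcupSim (As : Set (Set Γ)) (𝓑 : Set (Set Γ)) : ℕ∞ :=
  sInf {m : ℕ∞ | ∃ (t : ℕ) (seq : Fin (t + 1) → Set Γ) (ops : Fin (t + 1) → Bool),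
    StepOK 𝓑 seq ops ∧ (∀ A ∈ As, ∃ i, seq i = A) ∧ m = ((unionCount ops : ℕ) : ℕ∞)}

/-- A semi-filter over `U`: a nonempty, upward-closed (within `U`) family of subsets
of `U` not containing `∅`. -/
def SemiFilter (U : Set Γ) (F : Set (Set Γ)) : Prop :=
  F.Nonempty ∧ (∀ S ∈ F, S ⊆ U) ∧
    (∀ S ∈ F, ∀ T : Set Γ, S ⊆ T → T ⊆ U → T ∈ F) ∧ ∅ ∉ F

/-- `F` is above the element `w` with respect to `𝓑` and `U`. -/
def Above (𝓑 : Set (Set Γ)) (U : Set Γ) (F : Set (Set Γ)) (w : Γ) : Prop :=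
  ∀ B ∈ 𝓑, w ∈ B → B ∩ U ∈ F

/-- `F` preserves the pair `p = (E, H)`. -/
def PreservesPair (F : Set (Set Γ)) (p : Set Γ × Set Γ) : Prop :=
  p.1 ∈ F → p.2 ∈ F → p.1 ∩ p.2 ∈ F

/-- `Λ` is a family of pairs of subsets of `U = Aᶜ` such that no semi-filter over `U`
both preserves `Λ` and is above some element of `A`. -/
def Covers (A : Set Γ) (𝓑 : Set (Set Γ)) (Λ : Finset (Set Γ × Set Γ)) : Prop :=
  (∀ p ∈ Λ, p.1 ⊆ Aᶜ ∧ p.2 ⊆ Aᶜ) ∧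
    ¬∃ (F : Set (Set Γ)) (a : Γ), SemiFilter Aᶜ F ∧ a ∈ A ∧ Above 𝓑 Aᶜ F a ∧
      ∀ p ∈ Λ, PreservesPair F p

/-- The cover complexity `ρ(A, 𝓑)`. -/
noncomputable def rho (A : Set Γ) (𝓑 : Set (Set Γ)) : ℕ∞ :=
  sInf {m : ℕ∞ | ∃ Λ : Finset (Set Γ × Set Γ), Covers A 𝓑 Λ ∧ m = ((Λ.card : ℕ) : ℕ∞)}

/-- A semi-ultra-filter over `U`: a semi-filter containing, for every `A' ⊆ U`, at
least one of `A'` and `U \ A'`. -/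
def SemiUltraFilter (U : Set Γ) (F : Set (Set Γ)) : Prop :=
  SemiFilter U F ∧ ∀ A' : Set Γ, A' ⊆ U → (A' ∈ F ∨ U \ A' ∈ F)

/-- The conondeterministic cover complexity `ρ_ultra(A, 𝓑)`. -/
noncomputable def rhoUltra (A : Set Γ) (𝓑 : Set (Set Γ)) : ℕ∞ :=
  sInf {m : ℕ∞ | ∃ Λ : Finset (Set Γ × Set Γ),
    (∀ p ∈ Λ, p.1 ⊆ Aᶜ ∧ p.2 ⊆ Aᶜ) ∧
    (¬∃ (F : Set (Set Γ)) (a : Γ), SemiUltraFilter Aᶜ F ∧ a ∈ A ∧ Above 𝓑 Aᶜ F a ∧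
      ∀ p ∈ Λ, PreservesPair F p) ∧
    m = ((Λ.card : ℕ) : ℕ∞)}

/-- One step of the evaluation of a syntactic (possibly cyclic) sequence: an argument
is either a reference to a member of the sequence or a fixed generator set. -/
def cycEval {t : ℕ} (arg1 arg2 : Fin t → Fin t ⊕ Set Γ) (ops : Fin t → Bool) :
    ℕ → Fin t → Set Γ
  | 0 => fun _ => ∅
  | j + 1 => fun i =>
      cycEval arg1 arg2 ops j i ∪
        (if ops i = true then
          Sum.elim (cycEval arg1 arg2 ops j) id (arg1 i) ∩
            Sum.elim (cycEval arg1 arg2 ops j) id (arg2 i)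
        else
          Sum.elim (cycEval arg1 arg2 ops j) id (arg1 i) ∪
            Sum.elim (cycEval arg1 arg2 ops j) id (arg2 i))

/-- The fixed set arguments of a syntactic sequence must be generators from `𝓑`. -/
def ArgsOK (𝓑 : Set (Set Γ)) {t : ℕ} (arg1 arg2 : Fin t → Fin t ⊕ Set Γ) : Prop :=
  ∀ i : Fin t, (∀ B : Set Γ, arg1 i = Sum.inr B → B ∈ 𝓑) ∧
    (∀ B : Set Γ, arg2 i = Sum.inr B → B ∈ 𝓑)

/-- The cyclic intersection complexity `D°_∩(A | 𝓑)`: the minimum number of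
intersection operations over all syntactic sequences generating `A` from `𝓑`. -/
noncomputable def DcapCyc (A : Set Γ) (𝓑 : Set (Set Γ)) : ℕ∞ :=
  sInf {m : ℕ∞ | ∃ (t : ℕ) (arg1 arg2 : Fin (t + 1) → Fin (t + 1) ⊕ Set Γ)
      (ops : Fin (t + 1) → Bool),
    ArgsOK 𝓑 arg1 arg2 ∧
    (∃ j : ℕ, ∀ j' ≥ j, cycEval arg1 arg2 ops j' (Fin.last t) = A) ∧
    m = ((interCount ops : ℕ) : ℕ∞)}

end Defs

/-- The row star `R_i ⊆ [N] × [M]`. -/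
def rowSet (N M : ℕ) (i : Fin N) : Set (Fin N × Fin M) := {p | p.1 = i}

/-- The column star `C_j ⊆ [N] × [M]`. -/
def colSet (N M : ℕ) (j : Fin M) : Set (Fin N × Fin M) := {p | p.2 = j}

/-- The generators `𝓖_{N,M}` of graph complexity: all row stars and column stars. -/
def graphGens (N M : ℕ) : Set (Set (Fin N × Fin M)) :=
  Set.range (rowSet N M) ∪ Set.range (colSet N M)

/-- The generators `𝓑_m` of Boolean circuit complexity over `{0,1}^m`:
all sets `B_i = {v : v_i = 1}` and their complements. -/
def cubeGens (m : ℕ) : Set (Set (Fin m → Bool)) :=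
  {S | ∃ i : Fin m, S = {v | v i = true} ∨ S = {v | v i = false}}

/-- `bin : [N] → {0,1}^n` for `N = 2^n`: the element `k` (representing the integer
`k + 1`) maps to the string `w` with `num(w) = k`, i.e. position `j` holds bit
`n - 1 - j` of `k`. -/
def binMap (n : ℕ) (k : Fin (2 ^ n)) : Fin n → Bool :=
  fun j => (k : ℕ).testBit (n - 1 - (j : ℕ))

/-- The bijection `φ : [N] × [N] → {0,1}^{2n}`, `φ(u, v) = bin(u)bin(v)`. -/
def phi (n : ℕ) (p : Fin (2 ^ n) × Fin (2 ^ n)) : Fin (2 * n) → Bool :=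
  fun j =>
    if h : (j : ℕ) < n then binMap n p.1 ⟨(j : ℕ), h⟩
    else binMap n p.2 ⟨(j : ℕ) - n, by have := j.isLt; omega⟩

/-- The canonical family `𝓕_e` for an edge `e = (u, v)` of a graph `G`:
all `W ⊆ Ḡ` containing `R_u ∩ Ḡ` or `C_v ∩ Ḡ`. -/
def canonFam (N : ℕ) (G : Set (Fin N × Fin N)) (e : Fin N × Fin N) :
    Set (Set (Fin N × Fin N)) :=
  {W | W ⊆ Gᶜ ∧ (rowSet N N e.1 ∩ Gᶜ ⊆ W ∨ colSet N N e.2 ∩ Gᶜ ⊆ W)}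

/-- The canonical cover complexity `ρ_can(G, 𝓖_{N,N})`: the minimum size of a family
`Λ` of pairs of subsets of `Ḡ` such that every canonical semi-filter `𝓕_e`
(for `e ∈ G`, when it is a semi-filter) fails to preserve some pair in `Λ`. -/
noncomputable def rhoCan (N : ℕ) (G : Set (Fin N × Fin N)) : ℕ∞ :=
  sInf {m : ℕ∞ | ∃ Λ : Finset (Set (Fin N × Fin N) × Set (Fin N × Fin N)),
    (∀ p ∈ Λ, p.1 ⊆ Gᶜ ∧ p.2 ⊆ Gᶜ) ∧
    (∀ e ∈ G, SemiFilter Gᶜ (canonFam N G e) →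
      ∃ p ∈ Λ, ¬ PreservesPair (canonFam N G e) p) ∧
    m = ((Λ.card : ℕ) : ℕ∞)}

/-!
The chain `ρ_can ≤ ρ ≤ D_∩` holds for every graph. A cover for `ρ` is a canonical cover since
`𝓕_e` is above `e`. For a generating sequence of `A`, the pairs `(X ∩ Aᶜ, Y ∩ Aᶜ)` of its
intersection steps form a cover: a semi-filter preserving them and above `a ∈ A` contains
`S ∩ Aᶜ` for every generated `S ∋ a`, so it would contain `A ∩ Aᶜ = ∅`.

Upper bound: `u ≠ v` iff for some bit `j < n` one of `u, v` has a `1` and one has a `0` there.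
The four sets involved are unions of row or column stars, so `G_NEQ` is generated with one
intersection per bit.

Lower bound: for `G_NEQ`, `𝓕_(u,v)` consists of the `W ⊆ Ḡ` containing `(u, u)` or `(v, v)`, so a
pair `(E, H)` it does not preserve puts exactly one of `(u, u)`, `(v, v)` into `E \ H`. Thus
`w ↦ ((w, w) ∈ E \ H)_{(E, H) ∈ Λ}` is injective and `N ≤ 2 ^ |Λ|`.
-/

section Generation

variable {Γ : Type*} {𝓑 : Set (Set Γ)}

lemma interCount_append {m n : ℕ} (o₁ : Fin m → Bool) (o₂ : Fin n → Bool) :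
    interCount (Fin.append o₁ o₂) = interCount o₁ + interCount o₂ := by
  simp only [interCount, Finset.card_filter, Fin.sum_univ_add, Fin.append_left, Fin.append_right]

lemma stepOK_at_of_strictMono {m k : ℕ} {seq : Fin m → Set Γ} {ops : Fin m → Bool}
    {seq' : Fin k → Set Γ} {ops' : Fin k → Bool} {φ : Fin m → Fin k} (hφ : StrictMono φ)
    (hseq : ∀ i, seq' (φ i) = seq i) (hops : ∀ i, ops' (φ i) = ops i)
    (h : StepOK 𝓑 seq ops) (i : Fin m) :
    ∃ X Y : Set Γ, (X ∈ 𝓑 ∨ ∃ j < φ i, X = seq' j) ∧ (Y ∈ 𝓑 ∨ ∃ j < φ i, Y = seq' j) ∧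
      seq' (φ i) = if ops' (φ i) = true then X ∩ Y else X ∪ Y := by
  have transport {X : Set Γ} (hX : X ∈ 𝓑 ∨ ∃ j < i, X = seq j) :
      X ∈ 𝓑 ∨ ∃ j < φ i, X = seq' j :=
    hX.imp_right fun ⟨j, hj, hXj⟩ => ⟨φ j, hφ hj, hXj.trans (hseq j).symm⟩
  obtain ⟨X, Y, hX, hY, hi⟩ := h i
  exact ⟨X, Y, transport hX, transport hY, by rw [hseq, hops, hi]⟩

lemma StepOK.append_append {m n : ℕ} {s₁ : Fin m → Set Γ} {o₁ : Fin m → Bool}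
    {s₂ : Fin n → Set Γ} {o₂ : Fin n → Bool} (h₁ : StepOK 𝓑 s₁ o₁) (h₂ : StepOK 𝓑 s₂ o₂)
    (i₁ : Fin m) (i₂ : Fin n) (op : Bool) :
    StepOK 𝓑
      (Fin.append (Fin.append s₁ s₂) fun _ : Fin 1 =>
        if op then s₁ i₁ ∩ s₂ i₂ else s₁ i₁ ∪ s₂ i₂)
      (Fin.append (Fin.append o₁ o₂) fun _ : Fin 1 => op) := by
  intro i
  induction i using Fin.addCases with
  | left i =>
    induction i using Fin.addCases with
    | left i =>
      exact stepOK_at_of_strictMono ((Fin.strictMono_castAdd 1).comp (Fin.strictMono_castAdd n))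
        (by simp) (by simp) h₁ i
    | right i =>
      exact stepOK_at_of_strictMono ((Fin.strictMono_castAdd 1).comp (Fin.strictMono_natAdd m))
        (by simp) (by simp) h₂ i
  | right i =>
    have hlt : ∀ j : Fin (m + n), Fin.castAdd 1 j < Fin.natAdd (m + n) i := fun j => by
      rw [Fin.lt_def, Fin.val_castAdd, Fin.val_natAdd]; omega
    exact ⟨s₁ i₁, s₂ i₂, Or.inr ⟨_, hlt (Fin.castAdd n i₁), by simp⟩,
      Or.inr ⟨_, hlt (Fin.natAdd m i₂), by simp⟩, by simp⟩

lemma Dcap_le_interCount {t : ℕ} {seq : Fin (t + 1) → Set Γ} {ops : Fin (t + 1) → Bool}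
    (h : StepOK 𝓑 seq ops) : Dcap (seq (Fin.last t)) 𝓑 ≤ interCount ops :=
  sInf_le ⟨t, seq, ops, h, rfl, rfl⟩

lemma exists_stepOK_of_Dcap_ne_top {A : Set Γ} (h : Dcap A 𝓑 ≠ ⊤) :
    ∃ (t : ℕ) (seq : Fin (t + 1) → Set Γ) (ops : Fin (t + 1) → Bool),
      StepOK 𝓑 seq ops ∧ seq (Fin.last t) = A ∧ Dcap A 𝓑 = interCount ops := by
  rw [Dcap, Ne, sInf_eq_top] at h
  push Not at h
  obtain ⟨m, hm, -⟩ := h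
  obtain ⟨t, seq, ops, hstep, hA, hcount⟩ := csInf_mem ⟨m, hm⟩
  exact ⟨t, seq, ops, hstep, hA, hcount⟩

lemma Dcap_eq_zero_of_mem {B : Set Γ} (hB : B ∈ 𝓑) : Dcap B 𝓑 = 0 :=
  nonpos_iff_eq_zero.1 <| by
    simpa [interCount] using Dcap_le_interCount (t := 0) (seq := fun _ => B)
      (ops := fun _ => false) fun _ => ⟨B, B, Or.inl hB, Or.inl hB, by simp⟩

lemma Dcap_combine_le (X Y : Set Γ) (op : Bool) :
    Dcap (if op then X ∩ Y else X ∪ Y) 𝓑 ≤ Dcap X 𝓑 + Dcap Y 𝓑 + op.toNat := by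
  rcases eq_or_ne (Dcap X 𝓑) ⊤ with hX | hX
  · simp [hX]
  rcases eq_or_ne (Dcap Y 𝓑) ⊤ with hY | hY
  · simp [hY]
  obtain ⟨a, s₁, o₁, h₁, rfl, hX⟩ := exists_stepOK_of_Dcap_ne_top hX
  obtain ⟨b, s₂, o₂, h₂, rfl, hY⟩ := exists_stepOK_of_Dcap_ne_top hY
  have h := Dcap_le_interCount (h₁.append_append h₂ (Fin.last a) (Fin.last b) op)
  have hlast : ∀ z : Set Γ, Fin.append (Fin.append s₁ s₂) (fun _ : Fin 1 => z) (Fin.last _) = z :=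
    fun z => Fin.append_right _ _ 0
  have hop : interCount (fun _ : Fin 1 => op) = op.toNat := by cases op <;> rfl
  rw [hlast, interCount_append, interCount_append, hop] at h
  rw [hX, hY]
  exact_mod_cast h

lemma Dcap_union_le (X Y : Set Γ) : Dcap (X ∪ Y) 𝓑 ≤ Dcap X 𝓑 + Dcap Y 𝓑 := by
  simpa using Dcap_combine_le (𝓑 := 𝓑) X Y false

lemma Dcap_inter_le (X Y : Set Γ) : Dcap (X ∩ Y) 𝓑 ≤ Dcap X 𝓑 + Dcap Y 𝓑 + 1 := by
  simpa using Dcap_combine_le (𝓑 := 𝓑) X Y true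

lemma Dcap_biUnion_le {ι : Type*} [DecidableEq ι] {s : Finset ι} (hs : s.Nonempty)
    (f : ι → Set Γ) : Dcap (⋃ i ∈ s, f i) 𝓑 ≤ ∑ i ∈ s, Dcap (f i) 𝓑 := by
  induction hs using Finset.Nonempty.cons_induction with
  | singleton a => simp
  | cons a s ha hs ih =>
    rw [Finset.cons_eq_insert, Finset.set_biUnion_insert, Finset.sum_insert ha]
    exact (Dcap_union_le _ _).trans (by gcongr)

lemma Dcap_biUnion_eq_zero {ι : Type*} [DecidableEq ι] {s : Finset ι}
    (hs : s.Nonempty) {f : ι → Set Γ} (hf : ∀ i ∈ s, f i ∈ 𝓑) : Dcap (⋃ i ∈ s, f i) 𝓑 = 0 :=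
  nonpos_iff_eq_zero.1 <| (Dcap_biUnion_le hs f).trans_eq <|
    Finset.sum_eq_zero fun i hi => Dcap_eq_zero_of_mem (hf i hi)

end Generation

section Covers

variable {Γ : Type*}

lemma inter_mem_of_mem_seq {𝓑 : Set (Set Γ)} {U : Set Γ} {F : Set (Set Γ)} {a : Γ} {t : ℕ}
    {seq : Fin t → Set Γ} {ops : Fin t → Bool} (X Y : Fin t → Set Γ)
    (hX : ∀ i, X i ∈ 𝓑 ∨ ∃ j < i, X i = seq j) (hY : ∀ i, Y i ∈ 𝓑 ∨ ∃ j < i, Y i = seq j)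
    (hseq : ∀ i, seq i = if ops i = true then X i ∩ Y i else X i ∪ Y i)
    (hF : SemiFilter U F) (ha : Above 𝓑 U F a)
    (hpres : ∀ i, ops i = true → PreservesPair F (X i ∩ U, Y i ∩ U)) (i : Fin t) :
    a ∈ seq i → seq i ∩ U ∈ F := by
  induction i using WellFoundedLT.induction with
  | _ i ih =>
  have harg : ∀ Z, (Z ∈ 𝓑 ∨ ∃ j < i, Z = seq j) → a ∈ Z → Z ∩ U ∈ F := by
    rintro Z (hZ | ⟨j, hj, rfl⟩) haZ
    · exact ha Z hZ haZ
    · exact ih j hj haZ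
  intro hai
  rw [hseq i] at hai ⊢
  cases hop : ops i
  · simp only [hop, Bool.false_eq_true, if_false] at hai ⊢
    have hup : ∀ Z, Z ⊆ X i ∪ Y i → Z ∩ U ∈ F → (X i ∪ Y i) ∩ U ∈ F := fun Z hZ hZU =>
      hF.2.2.1 _ hZU _ (inter_subset_inter_left _ hZ) inter_subset_right
    rcases hai with h | h
    · exact hup _ subset_union_left (harg _ (hX i) h)
    · exact hup _ subset_union_right (harg _ (hY i) h)
  · simp only [hop, if_true] at hai ⊢
    have h := hpres i hop (harg _ (hX i) hai.1) (harg _ (hY i) hai.2)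
    rwa [← inter_inter_distrib_right] at h

lemma rho_le_Dcap (A : Set Γ) (𝓑 : Set (Set Γ)) : rho A 𝓑 ≤ Dcap A 𝓑 := by
  classical
  refine le_sInf ?_
  rintro _ ⟨t, seq, ops, hstep, rfl, rfl⟩
  choose X Y hX hY hseq using hstep
  set U := (seq (Fin.last t))ᶜ
  let Λ := (Finset.univ.filter fun i => ops i = true).image fun i => (X i ∩ U, Y i ∩ U)
  have hcov : Covers (seq (Fin.last t)) 𝓑 Λ := by
    refine ⟨?_, ?_⟩
    · simp only [Λ, Finset.mem_image]
      rintro _ ⟨i, -, rfl⟩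
      exact ⟨inter_subset_right, inter_subset_right⟩
    · rintro ⟨F, a, hF, haA, ha, hpres⟩
      have hpres' : ∀ i, ops i = true → PreservesPair F (X i ∩ U, Y i ∩ U) := fun i hi =>
        hpres _ (Finset.mem_image_of_mem _ (by simpa using hi))
      have h := inter_mem_of_mem_seq X Y hX hY hseq hF ha hpres' _ haA
      exact hF.2.2.2 (by rwa [inter_compl_self] at h)
  calc rho _ 𝓑 ≤ Λ.card := sInf_le ⟨Λ, hcov, rfl⟩
    _ ≤ interCount ops := by exact_mod_cast Finset.card_image_le

end Covers

lemma rhoCan_le_rho (N : ℕ) (G : Set (Fin N × Fin N)) :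
    rhoCan N G ≤ rho G (graphGens N N) := by
  refine le_sInf ?_
  rintro _ ⟨Λ, ⟨hsub, hno⟩, rfl⟩
  refine sInf_le ⟨Λ, hsub, fun e he hF => ?_, rfl⟩
  by_contra! h
  refine hno ⟨canonFam N G e, e, hF, he, ?_, h⟩
  rintro _ (⟨i, rfl⟩ | ⟨j, rfl⟩) heB
  · exact ⟨inter_subset_right, Or.inl (by rw [show e.1 = i from heB])⟩
  · exact ⟨inter_subset_right, Or.inr (by rw [show e.2 = j from heB])⟩

section CanonicalFamily

variable {N : ℕ}

lemma rowSet_inter_compl_ne (u : Fin N) :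
    rowSet N N u ∩ {p : Fin N × Fin N | p.1 ≠ p.2}ᶜ = {(u, u)} := by
  ext ⟨a, b⟩
  simp only [rowSet, mem_inter_iff, mem_ofPred_eq, mem_compl_iff, not_not, mem_singleton_iff,
    Prod.mk.injEq]
  constructor <;> rintro ⟨rfl, rfl⟩ <;> exact ⟨rfl, rfl⟩

lemma colSet_inter_compl_ne (v : Fin N) :
    colSet N N v ∩ {p : Fin N × Fin N | p.1 ≠ p.2}ᶜ = {(v, v)} := by
  ext ⟨a, b⟩
  simp only [colSet, mem_inter_iff, mem_ofPred_eq, mem_compl_iff, not_not, mem_singleton_iff,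
    Prod.mk.injEq]
  constructor <;> rintro ⟨rfl, rfl⟩ <;> exact ⟨rfl, rfl⟩

lemma mem_canonFam_ne {u v : Fin N} {W : Set (Fin N × Fin N)} :
    W ∈ canonFam N {p | p.1 ≠ p.2} (u, v) ↔
      W ⊆ {p : Fin N × Fin N | p.1 ≠ p.2}ᶜ ∧ ((u, u) ∈ W ∨ (v, v) ∈ W) := by
  simp only [canonFam, mem_ofPred_eq, rowSet_inter_compl_ne, colSet_inter_compl_ne,
    singleton_subset_iff]

lemma semiFilter_canonFam_ne (e : Fin N × Fin N) :
    SemiFilter {p : Fin N × Fin N | p.1 ≠ p.2}ᶜ (canonFam N {p | p.1 ≠ p.2} e) := by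
  obtain ⟨u, v⟩ := e
  refine ⟨⟨_, mem_canonFam_ne.2 ⟨subset_rfl, Or.inl (by simp)⟩⟩,
    fun W hW => (mem_canonFam_ne.1 hW).1, fun W hW T hWT hT => ?_, fun h => ?_⟩
  · exact mem_canonFam_ne.2 ⟨hT, (mem_canonFam_ne.1 hW).2.imp (@hWT _) (@hWT _)⟩
  · simpa using (mem_canonFam_ne.1 h).2

lemma card_le_two_pow_of_not_preservesPair
    (Λ : Finset (Set (Fin N × Fin N) × Set (Fin N × Fin N)))
    (h : ∀ u v : Fin N, u ≠ v → ∃ p ∈ Λ, ¬ PreservesPair (canonFam N {p | p.1 ≠ p.2} (u, v)) p) :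
    N ≤ 2 ^ Λ.card := by
  classical
  let σ : Fin N → Λ → Bool := fun w p => decide ((w, w) ∈ p.1.1 \ p.1.2)
  have hσ : Function.Injective σ := by
    intro u v huv
    by_contra hne
    obtain ⟨p, hp, hnp⟩ := h u v hne
    simp only [PreservesPair, mem_canonFam_ne, Classical.not_imp] at hnp
    obtain ⟨⟨hE, hEuv⟩, ⟨-, hHuv⟩, hEH⟩ := hnp
    have hEH' : ¬((u, u) ∈ p.1 ∩ p.2 ∨ (v, v) ∈ p.1 ∩ p.2) := fun hc =>
      hEH ⟨inter_subset_left.trans hE, hc⟩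
    have := congrFun huv ⟨p, hp⟩
    simp only [σ, Set.mem_sdiff, decide_eq_decide] at this
    simp only [mem_inter_iff] at hEH'
    tauto
  simpa using Fintype.card_le_of_injective σ hσ

lemma le_rhoCan_setOf_ne (n : ℕ) :
    (n : ℕ∞) ≤ rhoCan (2 ^ n) {p : Fin (2 ^ n) × Fin (2 ^ n) | p.1 ≠ p.2} := by
  refine le_sInf ?_
  rintro _ ⟨Λ, -, hΛ, rfl⟩
  have h := card_le_two_pow_of_not_preservesPair Λ fun u v huv =>
    hΛ (u, v) huv (semiFilter_canonFam_ne _)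
  exact_mod_cast (Nat.pow_le_pow_iff_right one_lt_two).1 h

end CanonicalFamily

section Stars

variable {N M : ℕ}

lemma Dcap_setOf_fst {P : Fin N → Prop} (hP : ∃ u, P u) :
    Dcap {p : Fin N × Fin M | P p.1} (graphGens N M) = 0 := by
  classical
  obtain ⟨u, hu⟩ := hP
  have h : {p : Fin N × Fin M | P p.1} = ⋃ u ∈ Finset.univ.filter P, rowSet N M u := by
    ext; simp [rowSet]
  rw [h]
  exact Dcap_biUnion_eq_zero ⟨u, by simpa using hu⟩ fun u _ => Or.inl ⟨u, rfl⟩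

lemma Dcap_setOf_snd {P : Fin M → Prop} (hP : ∃ v, P v) :
    Dcap {p : Fin N × Fin M | P p.2} (graphGens N M) = 0 := by
  classical
  obtain ⟨v, hv⟩ := hP
  have h : {p : Fin N × Fin M | P p.2} = ⋃ v ∈ Finset.univ.filter P, colSet N M v := by
    ext; simp [colSet]
  rw [h]
  exact Dcap_biUnion_eq_zero ⟨v, by simpa using hv⟩ fun v _ => Or.inr ⟨v, rfl⟩

end Stars

lemma Fin.exists_testBit_eq {n j : ℕ} (hj : j < n) (b : Bool) :
    ∃ u : Fin (2 ^ n), (u : ℕ).testBit j = b := by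
  cases b
  · exact ⟨⟨0, Nat.two_pow_pos n⟩, Nat.zero_testBit j⟩
  · exact ⟨⟨2 ^ j, Nat.pow_lt_pow_right one_lt_two hj⟩, by simp⟩

lemma Fin.ne_iff_exists_testBit_ne {n : ℕ} {u v : Fin (2 ^ n)} :
    u ≠ v ↔ ∃ j < n, (u : ℕ).testBit j ≠ (v : ℕ).testBit j := by
  refine ⟨fun huv => ?_, fun ⟨j, _, hj⟩ huv => hj (huv ▸ rfl)⟩
  obtain ⟨j, hj⟩ := Nat.exists_testBit_ne_of_ne (Fin.val_ne_of_ne huv)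
  refine ⟨j, lt_of_not_ge fun hnj => hj ?_, hj⟩
  have hle := Nat.pow_le_pow_right two_pos hnj
  rw [Nat.testBit_lt_two_pow (u.2.trans_le hle), Nat.testBit_lt_two_pow (v.2.trans_le hle)]

lemma setOf_ne_eq_biUnion_testBit (n : ℕ) :
    {p : Fin (2 ^ n) × Fin (2 ^ n) | p.1 ≠ p.2} = ⋃ j ∈ Finset.range n,
      ({p | (p.1 : ℕ).testBit j = true} ∪ {p | (p.2 : ℕ).testBit j = true}) ∩
        ({p | (p.1 : ℕ).testBit j = false} ∪ {p | (p.2 : ℕ).testBit j = false}) := by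
  ext ⟨u, v⟩
  simp only [mem_ofPred_eq, Fin.ne_iff_exists_testBit_ne, mem_iUnion, Finset.mem_range,
    exists_prop, mem_inter_iff, mem_union]
  refine exists_congr fun j => and_congr_right fun _ => ?_
  cases (u : ℕ).testBit j <;> cases (v : ℕ).testBit j <;> simp

lemma Dcap_setOf_ne_le {n : ℕ} (hn : 1 ≤ n) :
    Dcap {p : Fin (2 ^ n) × Fin (2 ^ n) | p.1 ≠ p.2} (graphGens (2 ^ n) (2 ^ n)) ≤ n := by
  rw [setOf_ne_eq_biUnion_testBit]
  refine (Dcap_biUnion_le (Finset.nonempty_range_iff.2 (by omega)) _).trans ?_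
  calc _ ≤ ∑ _j ∈ Finset.range n, (1 : ℕ∞) := Finset.sum_le_sum fun j hj => ?_
    _ = n := by simp
  have hj := Finset.mem_range.1 hj
  calc _ ≤ _ := Dcap_inter_le _ _
    _ ≤ (Dcap _ _ + Dcap _ _) + (Dcap _ _ + Dcap _ _) + 1 := by
      gcongr <;> exact Dcap_union_le _ _
    _ = 1 := by
      simp [Dcap_setOf_fst (Fin.exists_testBit_eq hj _),
        Dcap_setOf_snd (Fin.exists_testBit_eq hj _)]

/-- Tight bounds for `G_NEQ`: for `N = 2^n` with `n ≥ 1` and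
`G_NEQ = {(u, v) : u ≠ v}`,
`ρ_can(G_NEQ, 𝓖_{N,N}) = ρ(G_NEQ, 𝓖_{N,N}) = D_∩(G_NEQ | 𝓖_{N,N}) = n`. -/
theorem NEQ_tight_bounds (n : ℕ) (hn : 1 ≤ n) :
    rhoCan (2 ^ n) {p : Fin (2 ^ n) × Fin (2 ^ n) | p.1 ≠ p.2} = (n : ℕ∞) ∧
    rho {p : Fin (2 ^ n) × Fin (2 ^ n) | p.1 ≠ p.2} (graphGens (2 ^ n) (2 ^ n)) = (n : ℕ∞) ∧
    Dcap {p : Fin (2 ^ n) × Fin (2 ^ n) | p.1 ≠ p.2} (graphGens (2 ^ n) (2 ^ n)) = (n : ℕ∞) := by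
  have h₀ := le_rhoCan_setOf_ne n
  have h₁ := rhoCan_le_rho (2 ^ n) {p : Fin (2 ^ n) × Fin (2 ^ n) | p.1 ≠ p.2}
  have h₂ := rho_le_Dcap {p : Fin (2 ^ n) × Fin (2 ^ n) | p.1 ≠ p.2} (graphGens (2 ^ n) (2 ^ n))
  have h₃ := Dcap_setOf_ne_le hn
  exact ⟨le_antisymm (h₁.trans (h₂.trans h₃)) h₀, le_antisymm (h₂.trans h₃) (h₀.trans h₁),
    le_antisymm h₃ (h₀.trans (h₁.trans h₂))⟩
end

section
/- Let N = 2^n. For every graph G ⊆ [N] × [N], ρ_ultra(G, 𝓖_{N,N}) ≤ ρ_ultra(φ(G), 𝓑_{2n}); that is, the conondeterministic cover complexity of G with respect to the graph-complexity generators is at most the conondeterministic cover complexity of the associated Boolean function f_G with respect to the circuit-complexity generators. -/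
open Set Filter

/-! A semi-ultra-filter `F` on `Gᶜ` above `a ∈ G` is pushed forward along the injection `φ` to
`{S ⊆ φ(G)ᶜ | φ⁻¹(S) ∈ F}`, again a semi-ultra-filter. Every cube generator `{v | v i = b}`
containing `φ a` contains the `φ`-image of the row star of `a` (if `i < n`) or of its column
star (otherwise), so the pushed-forward family is above `φ a`. Hence the preimages of a family
of pairs defeating all such semi-ultra-filters over `φ(G)ᶜ` defeat `F`. -/

section SemiFilterMap

variable {α β : Type*}

def semiFilterMap (f : α → β) (U' : Set β) (F : Set (Set α)) : Set (Set β) :=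
  {S | S ⊆ U' ∧ f ⁻¹' S ∈ F}

variable {f : α → β} {U : Set α} {U' : Set β} {F : Set (Set α)}

theorem SemiFilter.map (hU : f ⁻¹' U' = U) (hF : SemiFilter U F) :
    SemiFilter U' (semiFilterMap f U' F) := by
  obtain ⟨⟨W, hW⟩, hsub, hup, hempty⟩ := hF
  refine ⟨⟨U', subset_rfl, ?_⟩, fun S hS => hS.1, ?_, fun h => hempty h.2⟩
  · rw [hU]
    exact hup W hW U (hsub W hW) subset_rfl
  · rintro S ⟨-, hS⟩ T hST hT
    exact ⟨hT, hup _ hS _ (preimage_mono hST) (hU ▸ preimage_mono hT)⟩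

theorem SemiUltraFilter.map (hU : f ⁻¹' U' = U) (hF : SemiUltraFilter U F) :
    SemiUltraFilter U' (semiFilterMap f U' F) := by
  refine ⟨hF.1.map hU, fun A' hA' => ?_⟩
  rcases hF.2 (f ⁻¹' A') (hU ▸ preimage_mono hA') with h | h
  · exact Or.inl ⟨hA', h⟩
  · exact Or.inr ⟨sdiff_subset, by rwa [preimage_sdiff, hU]⟩

theorem PreservesPair.map {p : Set β × Set β} (hp : PreservesPair F (f ⁻¹' p.1, f ⁻¹' p.2)) :
    PreservesPair (semiFilterMap f U' F) p :=
  fun h₁ h₂ => ⟨inter_subset_left.trans h₁.1, hp h₁.2 h₂.2⟩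

theorem Above.map {𝓑 : Set (Set α)} {𝓑' : Set (Set β)} {a : α} (hU : f ⁻¹' U' = U)
    (hF : SemiFilter U F) (ha : Above 𝓑 U F a)
    (h𝓑 : ∀ B' ∈ 𝓑', f a ∈ B' → ∃ B ∈ 𝓑, a ∈ B ∧ B ⊆ f ⁻¹' B') :
    Above 𝓑' U' (semiFilterMap f U' F) (f a) := by
  intro B' hB' haB'
  obtain ⟨B, hB, haB, hBB'⟩ := h𝓑 B' hB' haB'
  refine ⟨inter_subset_right, hF.2.2.1 _ (ha B hB haB) _ ?_ ?_⟩ <;> rw [preimage_inter, hU]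
  · exact inter_subset_inter_left U hBB'
  · exact inter_subset_right

theorem rhoUltra_le_of_preimage_eq {A : Set α} {A' : Set β} {𝓑 : Set (Set α)}
    {𝓑' : Set (Set β)} (hA : f ⁻¹' A' = A)
    (h𝓑 : ∀ a ∈ A, ∀ B' ∈ 𝓑', f a ∈ B' → ∃ B ∈ 𝓑, a ∈ B ∧ B ⊆ f ⁻¹' B') :
    rhoUltra A 𝓑 ≤ rhoUltra A' 𝓑' := by
  classical
  have hAc : f ⁻¹' A'ᶜ = Aᶜ := by rw [preimage_compl, hA]
  refine le_sInf ?_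
  rintro _ ⟨Λ', hsub, hcover, rfl⟩
  set Λ := Λ'.image (Prod.map (f ⁻¹' ·) (f ⁻¹' ·))
  calc rhoUltra A 𝓑 ≤ (Λ.card : ℕ∞) := sInf_le ⟨Λ, ?_, ?_, rfl⟩
    _ ≤ Λ'.card := by exact_mod_cast Finset.card_image_le
  · simp only [Λ, Finset.mem_image]
    rintro _ ⟨p, hp, rfl⟩
    exact ⟨hAc ▸ preimage_mono (hsub p hp).1, hAc ▸ preimage_mono (hsub p hp).2⟩
  · rintro ⟨F, a, hF, haA, ha, hpres⟩
    have hfa : f a ∈ A' := (hA ▸ haA : a ∈ f ⁻¹' A')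
    exact hcover ⟨_, f a, hF.map hAc, hfa, ha.map hAc hF.1 (h𝓑 a haA),
      fun p hp => .map (hpres _ (Finset.mem_image_of_mem _ hp))⟩

end SemiFilterMap

theorem binMap_injective (n : ℕ) : Function.Injective (binMap n) := by
  intro k k' h
  refine Fin.ext (Nat.eq_of_testBit_eq fun i => ?_)
  by_cases hi : i < n
  · simpa [binMap, show n - 1 - (n - 1 - i) = i by omega] using congrFun h ⟨n - 1 - i, by omega⟩
  · have h2i : 2 ^ n ≤ 2 ^ i := Nat.pow_le_pow_right two_pos (by omega)
    rw [Nat.testBit_lt_two_pow (k.isLt.trans_le h2i), Nat.testBit_lt_two_pow (k'.isLt.trans_le h2i)]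

theorem phi_injective (n : ℕ) : Function.Injective (phi n) := by
  intro p q h
  refine Prod.ext (binMap_injective n (funext fun j => ?_))
    (binMap_injective n (funext fun j => ?_))
  · simpa [phi] using congrFun h ⟨j, by omega⟩
  · simpa [phi] using congrFun h ⟨n + j, by omega⟩

theorem phi_apply_eq_of_fst_eq {n : ℕ} {p q : Fin (2 ^ n) × Fin (2 ^ n)} {i : Fin (2 * n)}
    (hi : (i : ℕ) < n) (h : p.1 = q.1) : phi n p i = phi n q i := by
  simp only [phi, dif_pos hi, h]

theorem phi_apply_eq_of_snd_eq {n : ℕ} {p q : Fin (2 ^ n) × Fin (2 ^ n)} {i : Fin (2 * n)}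
    (hi : ¬(i : ℕ) < n) (h : p.2 = q.2) : phi n p i = phi n q i := by
  simp only [phi, dif_neg hi, h]

theorem eq_setOf_apply_eq_of_mem_cubeGens {m : ℕ} {B : Set (Fin m → Bool)} {v : Fin m → Bool}
    (hB : B ∈ cubeGens m) (hv : v ∈ B) : ∃ i, B = {w | w i = v i} := by
  obtain ⟨i, rfl | rfl⟩ := hB <;> exact ⟨i, by rw [hv]⟩

theorem exists_graphGens_subset_preimage_phi {n : ℕ} (a : Fin (2 ^ n) × Fin (2 ^ n))
    {B' : Set (Fin (2 * n) → Bool)} (hB' : B' ∈ cubeGens (2 * n)) (ha : phi n a ∈ B') :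
    ∃ B ∈ graphGens (2 ^ n) (2 ^ n), a ∈ B ∧ B ⊆ phi n ⁻¹' B' := by
  obtain ⟨i, rfl⟩ := eq_setOf_apply_eq_of_mem_cubeGens hB' ha
  by_cases hi : (i : ℕ) < n
  · exact ⟨rowSet _ _ a.1, Or.inl ⟨a.1, rfl⟩, rfl, fun p hp => phi_apply_eq_of_fst_eq hi hp⟩
  · exact ⟨colSet _ _ a.2, Or.inr ⟨a.2, rfl⟩, rfl, fun p hp => phi_apply_eq_of_snd_eq hi hp⟩

/-- Nondeterministic fusion transference lemma: for `N = 2^n` and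
every graph `G ⊆ [N] × [N]`, `ρ_ultra(G, 𝓖_{N,N}) ≤ ρ_ultra(φ(G), 𝓑_{2n})`. -/
theorem nondet_fusion_transference (n : ℕ) (G : Set (Fin (2 ^ n) × Fin (2 ^ n))) :
    rhoUltra G (graphGens (2 ^ n) (2 ^ n)) ≤ rhoUltra (phi n '' G) (cubeGens (2 * n)) :=
  rhoUltra_le_of_preimage_eq ((phi_injective n).preimage_image G)
    fun a _ _ hB' ha => exists_graphGens_subset_preimage_phi a hB' ha
end
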